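/- arXiv:2402.04157 — 4 statements merged into one kernel-verified Lean document; each statement's English description precedes it below -/
import Mathlib

section
/- Let E be an n1×n2 real matrix, F an n1×n3 real matrix, and G an n3×n3 real symmetric positive semidefinite matrix. Then E Eᵀ ⪯ F G Fᵀ (in the Loewner order) if and only if there exists an n3×n2 real matrix D such that E = F D and D Dᵀ ⪯ G. -/
/-!
Write `G = Rᴴ R`, so that `F G Fᴴ = B Bᴴ` with `B = F Rᴴ`; it then suffices to prove Douglas's
factorization lemma: if `E Eᴴ ⪯ B Bᴴ` then `E = B C` for a contraction `C`, and `D = Rᴴ C` works.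
For Douglas's lemma let `N` be the Moore–Penrose pseudo-inverse of `M = B Bᴴ` and `C = Bᴴ N E`.
The kernel of `M` lies in that of `Eᴴ`, so `M N` fixes the columns of `E` and `B C = E`; and
`C Cᴴ = Bᴴ N E Eᴴ N B ⪯ Bᴴ N M N B = Bᴴ N B`, which is an orthogonal projection, hence `⪯ 1`.
-/

open Matrix

namespace Matrix

open scoped ComplexOrder MatrixOrder

variable {𝕜 : Type*} [RCLike 𝕜] {m n p : Type*} [Fintype m] [Fintype n] [Fintype p]

/-- `cfc (·⁻¹) M` inverts `M` on its range and vanishes on its kernel, because `0⁻¹ = 0`; the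
two identities hold pointwise for every real number. -/
theorem IsHermitian.exists_pinv [DecidableEq m] {M : Matrix m m 𝕜} (hM : M.IsHermitian) :
    ∃ N : Matrix m m 𝕜, N.IsHermitian ∧ N * M * N = N ∧ M * N * M = M := by
  have hcont (f : ℝ → ℝ) : ContinuousOn f (spectrum ℝ M) := M.finite_real_spectrum.continuousOn f
  have hmul₃ (f g h : ℝ → ℝ) :
      cfc f M * cfc g M * cfc h M = cfc (fun t => f t * g t * h t) M := by
    rw [← cfc_mul f g M (hcont f) (hcont g), ← cfc_mul _ h M (hcont _) (hcont h)]
  have hid : cfc (fun t : ℝ => t) M = M := cfc_id' ℝ M hM.isSelfAdjoint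
  refine ⟨cfc (·⁻¹ : ℝ → ℝ) M, cfc_predicate _ M, ?_, ?_⟩
  · have hinv (t : ℝ) : t⁻¹ * t * t⁻¹ = t⁻¹ := by simpa using mul_inv_mul_cancel t⁻¹
    simpa only [hid, hinv] using hmul₃ (·⁻¹) (fun t => t) (·⁻¹)
  · simpa only [hid, mul_inv_mul_cancel] using hmul₃ (fun t => t) (·⁻¹) (fun t => t)

theorem conjTranspose_mul_eq_zero_of_posSemidef_sub {M : Matrix m m 𝕜} {E : Matrix m n 𝕜}
    (h : (M - E * Eᴴ).PosSemidef) {K : Matrix m p 𝕜} (hK : M * K = 0) : Eᴴ * K = 0 := by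
  have hnonpos : (Eᴴ * K)ᴴ * (Eᴴ * K) ≤ 0 := by
    rw [le_iff, zero_sub]
    convert h.conjTranspose_mul_mul_same K using 1
    simp only [Matrix.mul_sub, Matrix.sub_mul, conjTranspose_mul, conjTranspose_conjTranspose,
      Matrix.mul_assoc, hK, Matrix.mul_zero, zero_sub]
  exact conjTranspose_mul_self_eq_zero.mp
    (le_antisymm hnonpos (posSemidef_conjTranspose_mul_self _).nonneg)

theorem exists_eq_mul_posSemidef_one_sub_of_posSemidef_sub [DecidableEq m] [DecidableEq p]
    {B : Matrix m p 𝕜} {E : Matrix m n 𝕜} (h : (B * Bᴴ - E * Eᴴ).PosSemidef) :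
    ∃ C : Matrix p n 𝕜, E = B * C ∧ (1 - C * Cᴴ).PosSemidef := by
  obtain ⟨N, hN, hNMN, hMNM⟩ := (isHermitian_mul_conjTranspose_self B).exists_pinv
  have hE : E = B * Bᴴ * N * E := by
    have hK := conjTranspose_mul_eq_zero_of_posSemidef_sub h (K := 1 - N * (B * Bᴴ))
      (by rw [Matrix.mul_sub, ← Matrix.mul_assoc, hMNM, Matrix.mul_one, sub_self])
    simpa [conjTranspose_mul, hN.eq, Matrix.sub_mul, sub_eq_zero] using congrArg conjTranspose hK
  have hBNMNB : Bᴴ * N * (B * Bᴴ) * (N * B) = Bᴴ * N * B := by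
    calc Bᴴ * N * (B * Bᴴ) * (N * B) = Bᴴ * (N * (B * Bᴴ) * N) * B := by
          simp only [Matrix.mul_assoc]
      _ = Bᴴ * N * B := by rw [hNMN, Matrix.mul_assoc]
  have hproj : IsStarProjection (Bᴴ * N * B) :=
    ⟨by unfold IsIdempotentElem; simpa only [Matrix.mul_assoc] using hBNMNB,
      isHermitian_conjTranspose_mul_mul B hN⟩
  refine ⟨Bᴴ * N * E, by simpa only [Matrix.mul_assoc] using hE, ?_⟩
  have hsplit : 1 - Bᴴ * N * E * (Bᴴ * N * E)ᴴ =
      (1 - Bᴴ * N * B) + (Bᴴ * N) * (B * Bᴴ - E * Eᴴ) * (Bᴴ * N)ᴴ := by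
    have hNB : (Bᴴ * N)ᴴ = N * B := by rw [conjTranspose_mul, hN.eq, conjTranspose_conjTranspose]
    rw [Matrix.mul_sub, Matrix.sub_mul, hNB, hBNMNB]
    simp only [conjTranspose_mul, hN.eq, conjTranspose_conjTranspose, Matrix.mul_assoc]
    abel
  rw [hsplit]
  exact (nonneg_iff_posSemidef.mp hproj.one_sub_nonneg).add (h.mul_mul_conjTranspose_same _)

theorem posSemidef_mul_mul_conjTranspose_sub_iff [DecidableEq m] [DecidableEq p]
    {E : Matrix m n 𝕜} {F : Matrix m p 𝕜} {G : Matrix p p 𝕜} (hG : G.PosSemidef) :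
    (F * G * Fᴴ - E * Eᴴ).PosSemidef ↔
      ∃ D : Matrix p n 𝕜, E = F * D ∧ (G - D * Dᴴ).PosSemidef := by
  constructor
  · intro h
    obtain ⟨R, rfl⟩ := CStarAlgebra.nonneg_iff_eq_star_mul_self.mp hG.nonneg
    obtain ⟨C, rfl, hC⟩ := exists_eq_mul_posSemidef_one_sub_of_posSemidef_sub (B := F * Rᴴ)
      (by simpa [Matrix.mul_assoc, star_eq_conjTranspose] using h)
    refine ⟨Rᴴ * C, Matrix.mul_assoc _ _ _, ?_⟩
    simpa [Matrix.mul_sub, Matrix.sub_mul, Matrix.mul_assoc, star_eq_conjTranspose] using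
      hC.mul_mul_conjTranspose_same Rᴴ
  · rintro ⟨D, rfl, hD⟩
    simpa [Matrix.mul_sub, Matrix.sub_mul, Matrix.mul_assoc] using hD.mul_mul_conjTranspose_same F

end Matrix

theorem stmt0 (n1 n2 n3 : ℕ)
    (E : Matrix (Fin n1) (Fin n2) ℝ) (F : Matrix (Fin n1) (Fin n3) ℝ)
    (G : Matrix (Fin n3) (Fin n3) ℝ) (hG : G.PosSemidef) :
    (F * G * Fᵀ - E * Eᵀ).PosSemidef ↔
      ∃ D : Matrix (Fin n3) (Fin n2) ℝ, E = F * D ∧ (G - D * Dᵀ).PosSemidef := by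
  simpa only [conjTranspose_eq_transpose_of_trivial] using
    posSemidef_mul_mul_conjTranspose_sub_iff (E := E) (F := F) hG
end

section
/- Let Ê₁ be a p×m real matrix, F̂₁ a p×n real matrix with full row rank, Λ₁ a diagonal positive definite n×n matrix, and suppose Ê₁ Ê₁ᵀ ⪯ F̂₁ Λ₁ F̂₁ᵀ. Define F̂₁ᴿ := Λ₁ F̂₁ᵀ (F̂₁ Λ₁ F̂₁ᵀ)⁻¹ and D₁ := F̂₁ᴿ Ê₁. Then Ê₁ = F̂₁ D₁ and D₁ D₁ᵀ ⪯ Λ₁. -/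
/-!
Since `S = F Λ Fᴴ` is positive definite, `R = Λ Fᴴ S⁻¹` is a right inverse of `F`, so
`E = F (R E)`. Conjugating `E Eᴴ ≤ S` by `R` gives `D Dᴴ ≤ R S Rᴴ = Λ Fᴴ S⁻¹ F Λ`, and
`Λ - Λ Fᴴ S⁻¹ F Λ` is the Schur complement of `S` in the positive semidefinite block matrix
`[F; 1] Λ [F; 1]ᴴ`.
-/

open Matrix
open scoped MatrixOrder ComplexOrder

namespace Matrix

variable {m n : Type*} [Fintype m] [Fintype n] {𝕜 : Type*} [RCLike 𝕜]

theorem linearIndependent_row_of_rank_eq_card {R : Type*} [Field R] {F : Matrix m n R}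
    (hF : F.rank = Fintype.card m) : LinearIndependent R F.row := by
  rw [linearIndependent_iff_card_eq_finrank_span, Set.finrank, ← rank_eq_finrank_span_row, hF]

theorem PosDef.mul_mul_conjTranspose_of_rank_eq_card {Λ : Matrix n n 𝕜} (hΛ : Λ.PosDef)
    {F : Matrix m n 𝕜} (hF : F.rank = Fintype.card m) : (F * Λ * Fᴴ).PosDef :=
  hΛ.mul_mul_conjTranspose_same <| vecMul_injective_iff.mpr <|
    linearIndependent_row_of_rank_eq_card hF

theorem mul_mul_conjTranspose_le_mul_mul_conjTranspose {A B : Matrix m m 𝕜} (hAB : A ≤ B)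
    (C : Matrix n m 𝕜) : C * A * Cᴴ ≤ C * B * Cᴴ := by
  rw [le_iff] at hAB ⊢
  simpa only [Matrix.mul_sub, Matrix.sub_mul] using hAB.mul_mul_conjTranspose_same C

variable [DecidableEq m] [DecidableEq n]

theorem mul_conjTranspose_mul_inv_mul_mul_le_self {Λ : Matrix n n 𝕜} (hΛ : Λ.PosSemidef)
    {F : Matrix m n 𝕜} (hS : (F * Λ * Fᴴ).PosDef) : Λ * Fᴴ * (F * Λ * Fᴴ)⁻¹ * F * Λ ≤ Λ := by
  have : Invertible (F * Λ * Fᴴ) := hS.isUnit.invertible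
  have hblock : fromBlocks (F * Λ * Fᴴ) (F * Λ) (F * Λ)ᴴ Λ =
      fromRows F 1 * Λ * (fromRows F 1)ᴴ := by
    rw [conjTranspose_fromRows_eq_fromCols_conjTranspose, fromRows_mul, fromRows_mul_fromCols,
      conjTranspose_mul, hΛ.isHermitian.eq, conjTranspose_one]
    simp only [Matrix.one_mul, Matrix.mul_one]
  have hschur := (PosDef.fromBlocks₁₁ (F * Λ) Λ hS).mp
    (hblock ▸ hΛ.mul_mul_conjTranspose_same _)
  rw [le_iff]
  simpa only [conjTranspose_mul, hΛ.isHermitian.eq, Matrix.mul_assoc] using hschur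

end Matrix

theorem stmt6_general (n p m : ℕ)
    (E₁ : Matrix (Fin p) (Fin m) ℝ) (F₁ : Matrix (Fin p) (Fin n) ℝ)
    (hrank : F₁.rank = p)
    (Λ₁ : Matrix (Fin n) (Fin n) ℝ) (hΛ : Λ₁.PosDef)
    (h : (F₁ * Λ₁ * F₁ᵀ - E₁ * E₁ᵀ).PosSemidef)
    (FR : Matrix (Fin n) (Fin p) ℝ) (hFR : FR = Λ₁ * F₁ᵀ * (F₁ * Λ₁ * F₁ᵀ)⁻¹)
    (D₁ : Matrix (Fin n) (Fin m) ℝ) (hD : D₁ = FR * E₁) :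
    E₁ = F₁ * D₁ ∧ (Λ₁ - D₁ * D₁ᵀ).PosSemidef := by
  subst hFR hD
  simp only [← conjTranspose_eq_transpose_of_trivial] at h ⊢
  set S := F₁ * Λ₁ * F₁ᴴ
  have hS : S.PosDef := hΛ.mul_mul_conjTranspose_of_rank_eq_card (by rwa [Fintype.card_fin])
  have hSdet : IsUnit S.det := (isUnit_iff_isUnit_det S).mp hS.isUnit
  set R := Λ₁ * F₁ᴴ * S⁻¹
  have hFR : F₁ * R = 1 := by
    rw [← mul_nonsing_inv S hSdet]
    simp only [R, S, Matrix.mul_assoc]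
  have hRSR : R * S * Rᴴ = Λ₁ * F₁ᴴ * S⁻¹ * F₁ * Λ₁ := by
    simp only [R, conjTranspose_mul, conjTranspose_nonsing_inv, hS.isHermitian.eq,
      conjTranspose_conjTranspose, hΛ.isHermitian.eq, Matrix.mul_assoc,
      nonsing_inv_mul_cancel_left _ _ hSdet]
  refine ⟨by rw [← Matrix.mul_assoc, hFR, Matrix.one_mul], ?_⟩
  rw [← le_iff]
  calc R * E₁ * (R * E₁)ᴴ = R * (E₁ * E₁ᴴ) * Rᴴ := by
        simp only [conjTranspose_mul, Matrix.mul_assoc]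
    _ ≤ R * S * Rᴴ := mul_mul_conjTranspose_le_mul_mul_conjTranspose (le_iff.mpr h) R
    _ ≤ Λ₁ := hRSR ▸ mul_conjTranspose_mul_inv_mul_mul_le_self hΛ.posSemidef hS

theorem stmt6 (n p m : ℕ)
    (E₁ : Matrix (Fin p) (Fin m) ℝ) (F₁ : Matrix (Fin p) (Fin n) ℝ)
    (hrank : F₁.rank = p)
    (Λ₁ : Matrix (Fin n) (Fin n) ℝ) (hdiag : Λ₁.IsDiag) (hΛ : Λ₁.PosDef)
    (h : (F₁ * Λ₁ * F₁ᵀ - E₁ * E₁ᵀ).PosSemidef)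
    (FR : Matrix (Fin n) (Fin p) ℝ) (hFR : FR = Λ₁ * F₁ᵀ * (F₁ * Λ₁ * F₁ᵀ)⁻¹)
    (D₁ : Matrix (Fin n) (Fin m) ℝ) (hD : D₁ = FR * E₁) :
    E₁ = F₁ * D₁ ∧ (Λ₁ - D₁ * D₁ᵀ).PosSemidef :=
  stmt6_general n p m E₁ F₁ hrank Λ₁ hΛ h FR hFR D₁ hD
end

section
/- Let 𝒜 be an N×N symmetric positive definite matrix, 𝒵 an n×N matrix, and 𝒬 an n×n symmetric positive semidefinite matrix. Then the set { Z ∈ ℝ^{n×N} : (Z − 𝒵)𝒜(Z − 𝒵)ᵀ ⪯ 𝒬 } equals { 𝒵 + 𝒬^{1/2} Υ 𝒜^{−1/2} : Υ ∈ ℝ^{n×N}, Υ Υᵀ ⪯ I_n }. -/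
open Matrix

lemma stmt13_mulVec_all_zero {m k : ℕ} {M : Matrix (Fin m) (Fin k) ℝ}
    (h : ∀ x, M *ᵥ x = 0) : M = 0 := by
  ext i j
  have := congrFun (h (Pi.single j 1)) i
  simpa [mulVec_single] using this

lemma stmt13_douglas {n N : ℕ} {S : Matrix (Fin n) (Fin n) ℝ} (hS : S.PosSemidef)
    (B : Matrix (Fin n) (Fin N) ℝ) (h : (S * S - B * Bᵀ).PosSemidef) :
    ∃ Υ : Matrix (Fin n) (Fin N) ℝ,
      ((1 : Matrix (Fin n) (Fin n) ℝ) - Υ * Υᵀ).PosSemidef ∧ S * Υ = B := by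
  classical
  have hH := hS.isHermitian
  set U : Matrix (Fin n) (Fin n) ℝ := (hH.eigenvectorUnitary : Matrix (Fin n) (Fin n) ℝ) with hU
  set d : Fin n → ℝ := hH.eigenvalues with hd
  have hspec : S = U * diagonal d * Uᴴ := by
    have := hH.spectral_theorem
    simpa [hU, hd, Matrix.star_eq_conjTranspose, Function.comp] using this
  have hUU : U * Uᴴ = 1 := by
    have := (Matrix.mem_unitaryGroup_iff).mp hH.eigenvectorUnitary.2
    simpa [hU, Matrix.star_eq_conjTranspose] using this
  have hUU' : Uᴴ * U = 1 := by
    have := (Matrix.mem_unitaryGroup_iff').mp hH.eigenvectorUnitary.2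
    simpa [hU, Matrix.star_eq_conjTranspose] using this
  set g : Fin n → ℝ := fun i => if d i = 0 then 0 else (d i)⁻¹ with hg
  set e : Fin n → ℝ := fun i => if d i = 0 then 0 else 1 with he
  set Pinv : Matrix (Fin n) (Fin n) ℝ := U * diagonal g * Uᴴ with hPinv
  set P : Matrix (Fin n) (Fin n) ℝ := U * diagonal e * Uᴴ with hP
  have hde : (fun i => d i * g i) = e := by
    funext i; by_cases hdi : d i = 0 <;> simp [hg, he, hdi, mul_inv_cancel₀]
  have key : ∀ f₁ f₂ : Fin n → ℝ, (U * diagonal f₁ * Uᴴ) * (U * diagonal f₂ * Uᴴ)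
      = U * diagonal (fun i => f₁ i * f₂ i) * Uᴴ := by
    intro f₁ f₂
    calc (U * diagonal f₁ * Uᴴ) * (U * diagonal f₂ * Uᴴ)
        = U * (diagonal f₁ * (Uᴴ * U) * diagonal f₂) * Uᴴ := by
          simp only [Matrix.mul_assoc]
      _ = U * diagonal (fun i => f₁ i * f₂ i) * Uᴴ := by
          rw [hUU', Matrix.mul_one, diagonal_mul_diagonal]
  have hSP : S * Pinv = P := by
    rw [hspec, hPinv, key, hde]
  have hge : (fun i => g i * d i) = e := by
    funext i; by_cases hdi : d i = 0 <;> simp [hg, he, hdi, inv_mul_cancel₀]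
  have hdee : (fun i => d i * e i) = d := by
    funext i; by_cases hdi : d i = 0 <;> simp [he, hdi]
  have hPS : Pinv * S = P := by
    rw [hspec, hPinv, key, hge]
  have hSPS : S * P = S := by
    conv_lhs => rw [hspec, hP, key, hdee]
    rw [hspec]
  have hPsymm : Pᴴ = P := by
    rw [hP, conjTranspose_mul, conjTranspose_mul, conjTranspose_conjTranspose,
      diagonal_conjTranspose, Matrix.mul_assoc]
    simp [Matrix.mul_assoc]
  have hPinvsymm : Pinvᴴ = Pinv := by
    rw [hPinv, conjTranspose_mul, conjTranspose_mul, conjTranspose_conjTranspose,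
      diagonal_conjTranspose, Matrix.mul_assoc]
    simp [Matrix.mul_assoc]
  have hBtP : Bᵀ * (1 - P) = 0 := by
    apply stmt13_mulVec_all_zero
    intro x
    set y := (1 - P) *ᵥ x with hy
    have hSy : S *ᵥ y = 0 := by
      have h1 : S * (1 - P) = 0 := by
        rw [Matrix.mul_sub, Matrix.mul_one, hSPS, sub_self]
      have h2 : (S * (1 - P)) *ᵥ x = 0 := by rw [h1, zero_mulVec]
      rwa [← mulVec_mulVec] at h2
    have h0 : y ⬝ᵥ (B * Bᵀ) *ᵥ y = 0 := by
      have hle : 0 ≤ y ⬝ᵥ ((S * S - B * Bᵀ) *ᵥ y) := by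
        simpa [star_trivial] using h.dotProduct_mulVec_nonneg y
      have hSS : y ⬝ᵥ (S * S) *ᵥ y = 0 := by
        rw [← mulVec_mulVec, hSy, mulVec_zero, dotProduct_zero]
      have hge' : 0 ≤ y ⬝ᵥ (B * Bᵀ) *ᵥ y := by
        simpa [star_trivial] using (posSemidef_self_mul_conjTranspose B).dotProduct_mulVec_nonneg y
      have := hle
      rw [sub_mulVec, dotProduct_sub, hSS] at this
      linarith
    have hBy : Bᵀ *ᵥ y = 0 := by
      rw [← mulVec_mulVec, dotProduct_mulVec, ← mulVec_transpose,
        dotProduct_self_eq_zero] at h0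
      exact h0
    rw [← mulVec_mulVec]
    exact hBy
  have hPB : P * B = B := by
    have h1 : (1 - P) * B = 0 := by
      have := congrArg Matrix.transpose hBtP
      rw [transpose_mul, transpose_zero] at this
      have h2 : (1 - P)ᵀ = 1 - P := by
        have hPt : Pᵀ = P := by
          simpa [conjTranspose_eq_transpose_of_trivial] using hPsymm
        rw [transpose_sub, transpose_one, hPt]
      rwa [h2] at this
    rw [Matrix.sub_mul, Matrix.one_mul] at h1
    linear_combination (norm := abel) -h1
  refine ⟨Pinv * B, ?_, ?_⟩
  · have hPP : Pinv * (S * S) * Pinv = P := by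
      have hassoc : Pinv * (S * S) * Pinv = (Pinv * S) * (S * Pinv) := by
        simp only [Matrix.mul_assoc]
      have hee : (fun i => e i * e i) = e := by
        funext i; by_cases hdi : d i = 0 <;> simp [he, hdi]
      rw [hassoc, hPS, hSP, hP, key, hee]
    have hsum : (1 : Matrix (Fin n) (Fin n) ℝ) - (Pinv * B) * (Pinv * B)ᵀ
        = (1 - P) + Pinv * (S * S - B * Bᵀ) * Pinvᴴ := by
      rw [Matrix.mul_sub, Matrix.sub_mul, hPinvsymm]
      have h2 : Pinv * (B * Bᵀ) * Pinv = (Pinv * B) * (Pinv * B)ᵀ := by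
        rw [transpose_mul]
        have hPt : Pinvᵀ = Pinv := by
          simpa [conjTranspose_eq_transpose_of_trivial] using hPinvsymm
        rw [hPt]
        simp only [Matrix.mul_assoc]
      rw [h2, hPP]
      abel
    rw [hsum]
    apply Matrix.PosSemidef.add
    · have h1eq : (1 : Matrix (Fin n) (Fin n) ℝ) - P
          = U * diagonal (fun i => 1 - e i) * Uᴴ := by
        have hone : (1 : Matrix (Fin n) (Fin n) ℝ) = U * diagonal (fun _ => 1) * Uᴴ := by
          rw [diagonal_one, Matrix.mul_one, hUU]
        rw [hone, hP, ← Matrix.sub_mul, ← Matrix.mul_sub, diagonal_sub]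
      rw [h1eq]
      refine Matrix.PosSemidef.mul_mul_conjTranspose_same ?_ U
      refine posSemidef_diagonal_iff.mpr ?_
      intro i
      by_cases hdi : d i = 0 <;> simp [he, hdi]
    · exact h.mul_mul_conjTranspose_same Pinv
  · rw [← Matrix.mul_assoc, hSP, hPB]

namespace Matrix.PosSemidef

open scoped ComplexOrder

/-- The square root of a positive semidefinite matrix, as defined in Mathlib of December 2024. -/
noncomputable def sqrt {n 𝕜 : Type*} [Fintype n] [DecidableEq n] [RCLike 𝕜]
    {A : Matrix n n 𝕜} (hA : A.PosSemidef) : Matrix n n 𝕜 :=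
  (hA.1.eigenvectorUnitary : Matrix n n 𝕜) * diagonal ((↑) ∘ (√·) ∘ hA.1.eigenvalues) *
  (star (hA.1.eigenvectorUnitary : Matrix n n 𝕜))

lemma sqrt_mul_self {n : Type*} [Fintype n] [DecidableEq n] {A : Matrix n n ℝ}
    (hA : A.PosSemidef) : hA.sqrt * hA.sqrt = A := by
  have hUU : star (hA.1.eigenvectorUnitary : Matrix n n ℝ) * (hA.1.eigenvectorUnitary : Matrix n n ℝ) = 1 :=
    (Matrix.mem_unitaryGroup_iff').mp hA.1.eigenvectorUnitary.2
  have hspec := hA.1.spectral_theorem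
  simp only [Matrix.star_eq_conjTranspose] at hUU
  simp only [sqrt, Matrix.star_eq_conjTranspose]
  calc _ = (hA.1.eigenvectorUnitary : Matrix n n ℝ) *
        (diagonal ((RCLike.ofReal : ℝ → ℝ) ∘ (√·) ∘ hA.1.eigenvalues) *
          ((hA.1.eigenvectorUnitary : Matrix n n ℝ)ᴴ * (hA.1.eigenvectorUnitary : Matrix n n ℝ)) *
          diagonal ((RCLike.ofReal : ℝ → ℝ) ∘ (√·) ∘ hA.1.eigenvalues)) *
        (hA.1.eigenvectorUnitary : Matrix n n ℝ)ᴴ := by simp only [Matrix.mul_assoc]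
    _ = (hA.1.eigenvectorUnitary : Matrix n n ℝ) * diagonal hA.1.eigenvalues *
        (hA.1.eigenvectorUnitary : Matrix n n ℝ)ᴴ := by
      rw [hUU, Matrix.mul_one, diagonal_mul_diagonal]
      congr 2
      congr 1
      funext i
      simp [Real.mul_self_sqrt (hA.eigenvalues_nonneg i)]
    _ = A := by
      symm
      simpa [Matrix.star_eq_conjTranspose, Function.comp] using hspec

lemma posSemidef_sqrt {n : Type*} [Fintype n] [DecidableEq n] {A : Matrix n n ℝ}
    (hA : A.PosSemidef) : hA.sqrt.PosSemidef := by
  unfold sqrt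
  refine Matrix.PosSemidef.mul_mul_conjTranspose_same ?_ _
  refine posSemidef_diagonal_iff.mpr ?_
  intro i
  simp [Real.sqrt_nonneg]

end Matrix.PosSemidef

theorem stmt13 (N n : ℕ)
    (A : Matrix (Fin N) (Fin N) ℝ) (hA : A.PosDef)
    (Zc : Matrix (Fin n) (Fin N) ℝ)
    (Q : Matrix (Fin n) (Fin n) ℝ) (hQ : Q.PosSemidef) :
    {Z : Matrix (Fin n) (Fin N) ℝ | (Q - (Z - Zc) * A * (Z - Zc)ᵀ).PosSemidef} =
      {Z : Matrix (Fin n) (Fin N) ℝ | ∃ Υ : Matrix (Fin n) (Fin N) ℝ,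
        ((1 : Matrix (Fin n) (Fin n) ℝ) - Υ * Υᵀ).PosSemidef ∧
        Z = Zc + hQ.sqrt * Υ * (hA.posSemidef.sqrt)⁻¹} := by
  set S := hQ.sqrt with hSdef
  set R := hA.posSemidef.sqrt with hRdef
  have hSS : S * S = Q := hQ.sqrt_mul_self
  have hRR : R * R = A := hA.posSemidef.sqrt_mul_self
  have hSt : Sᵀ = S := by
    have := hQ.posSemidef_sqrt.isHermitian
    rwa [IsHermitian, conjTranspose_eq_transpose_of_trivial] at this
  have hRt : Rᵀ = R := by
    have := hA.posSemidef.posSemidef_sqrt.isHermitian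
    rwa [IsHermitian, conjTranspose_eq_transpose_of_trivial] at this
  have hRdet : IsUnit R.det := by
    rw [isUnit_iff_ne_zero]
    intro hzero
    have : A.det = 0 := by rw [← hRR, det_mul, hzero, mul_zero]
    exact absurd this (ne_of_gt hA.det_pos)
  ext Z
  simp only [Set.mem_setOf_eq]
  constructor
  · intro hZ
    have hB : (S * S - ((Z - Zc) * R) * ((Z - Zc) * R)ᵀ).PosSemidef := by
      rw [hSS, transpose_mul, hRt]
      have heq : (Z - Zc) * R * (R * (Z - Zc)ᵀ) = (Z - Zc) * A * (Z - Zc)ᵀ := by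
        rw [← hRR]; simp only [Matrix.mul_assoc]
      rw [heq]
      exact hZ
    obtain ⟨Υ, hΥ, hSΥ⟩ := stmt13_douglas hQ.posSemidef_sqrt ((Z - Zc) * R) hB
    refine ⟨Υ, hΥ, ?_⟩
    rw [hSΥ, Matrix.mul_assoc, Matrix.mul_nonsing_inv _ hRdet, Matrix.mul_one]
    abel
  · rintro ⟨Υ, hΥ, rfl⟩
    have hsub : Zc + S * Υ * R⁻¹ - Zc = S * Υ * R⁻¹ := by abel
    rw [hsub]
    have htr : (S * Υ * R⁻¹)ᵀ = R⁻¹ * (Υᵀ * S) := by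
      rw [transpose_mul, transpose_mul, transpose_nonsing_inv, hRt, hSt]
    rw [htr]
    have h1 : R⁻¹ * A * R⁻¹ = 1 := by
      rw [← hRR,
        show R⁻¹ * (R * R) * R⁻¹ = (R⁻¹ * R) * (R * R⁻¹) by simp only [Matrix.mul_assoc],
        Matrix.nonsing_inv_mul _ hRdet, Matrix.mul_nonsing_inv _ hRdet, Matrix.one_mul]
    have hfin : Q - S * Υ * R⁻¹ * A * (R⁻¹ * (Υᵀ * S)) = S * (1 - Υ * Υᵀ) * Sᴴ := by
      have h2 : S * Υ * R⁻¹ * A * (R⁻¹ * (Υᵀ * S)) = S * Υ * (R⁻¹ * A * R⁻¹) * (Υᵀ * S) := by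
        simp only [Matrix.mul_assoc]
      rw [h2, h1, Matrix.mul_one, conjTranspose_eq_transpose_of_trivial, hSt,
        Matrix.mul_sub, Matrix.sub_mul, Matrix.mul_one, hSS]
      simp only [Matrix.mul_assoc]
    rw [hfin]
    exact hΥ.mul_mul_conjTranspose_same S
end

section
/- Let x⁺ ∈ ℝⁿ, z ∈ ℝ^{n+m}, and θ ≥ 0. For an n×(n+m) matrix [A B] (with A n×n, B n×m), the following are equivalent: (i) there exists ε ∈ ℝ^{2n+m} with |ε|² ≤ θ such that x⁺ = [A B] z + [I −A −B] ε; (ii) (x⁺ − [A B] z)(x⁺ − [A B] z)ᵀ ⪯ [I −A −B] (θ I) [I −A −B]ᵀ; (iii) (x⁺ − [A B] z)(x⁺ − [A B] z)ᵀ ⪯ θ (I + A Aᵀ + B Bᵀ). -/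
open Matrix

lemma cs {N : Type*} [Fintype N] (a b : N → ℝ) : (a ⬝ᵥ b)^2 ≤ (a ⬝ᵥ a) * (b ⬝ᵥ b) := by
  simpa [dotProduct, sq] using Finset.sum_mul_sq_le_sq_mul_sq Finset.univ a b

lemma dns {N : Type*} [Fintype N] (a : N → ℝ) : 0 ≤ a ⬝ᵥ a :=
  Finset.sum_nonneg fun _ _ => mul_self_nonneg _

lemma dot_vecMulVec {n : Type*} [Fintype n] (w x : n → ℝ) :
    x ⬝ᵥ (vecMulVec w w) *ᵥ x = (w ⬝ᵥ x)^2 := by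
  simp [vecMulVec, mulVec, dotProduct, Finset.mul_sum, Finset.sum_mul, sq]
  rw [Finset.sum_comm]
  congr 1; ext i; congr 1; ext j; ring

lemma key {n N : Type*} [Fintype n] [Fintype N] [DecidableEq n]
    (F : Matrix n N ℝ) (w : n → ℝ) (θ : ℝ) (hθ : 0 ≤ θ) (hM : (F * Fᵀ).PosDef) :
    (∃ ε : N → ℝ, ε ⬝ᵥ ε ≤ θ ∧ w = F *ᵥ ε) ↔
      (θ • (F * Fᵀ) - vecMulVec w w).PosSemidef := by
  have hvt : (vecMulVec w w)ᵀ = vecMulVec w w := by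
    ext i j; simp [vecMulVec_apply, mul_comm]
  have hherm : (θ • (F * Fᵀ) - vecMulVec w w).IsHermitian := by
    unfold Matrix.IsHermitian
    show (θ • (F * Fᵀ) - vecMulVec w w)ᵀ = _
    rw [transpose_sub, transpose_smul, transpose_mul, transpose_transpose, hvt]
  constructor
  · rintro ⟨ε, hε, rfl⟩
    refine .of_dotProduct_mulVec_nonneg hherm fun x => ?_
    have key : (F *ᵥ ε) ⬝ᵥ x = ε ⬝ᵥ (Fᵀ *ᵥ x) := by
      rw [dotProduct_comm, dotProduct_mulVec, mulVec_transpose, dotProduct_comm]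
    show 0 ≤ x ⬝ᵥ _
    rw [sub_mulVec, dotProduct_sub, dot_vecMulVec, key]
    have h1 : x ⬝ᵥ (θ • (F * Fᵀ)) *ᵥ x = θ * ((Fᵀ *ᵥ x) ⬝ᵥ (Fᵀ *ᵥ x)) := by
      rw [smul_mulVec, dotProduct_smul, ← mulVec_mulVec, dotProduct_mulVec,
        ← mulVec_transpose]
      simp [smul_eq_mul]
    rw [h1]
    have := cs ε (Fᵀ *ᵥ x)
    nlinarith [dns (Fᵀ *ᵥ x), dns ε,
      mul_le_mul_of_nonneg_right hε (dns (Fᵀ *ᵥ x))]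
  · intro hpsd
    set M := F * Fᵀ with hMdef
    have hdet : IsUnit M.det := hM.det_pos.ne'.isUnit
    set u : n → ℝ := M⁻¹ *ᵥ w with hu
    have hMu : M *ᵥ u = w := by
      rw [hu, mulVec_mulVec, mul_nonsing_inv _ hdet, one_mulVec]
    have hsym : Mᵀ = M := by rw [hMdef, transpose_mul, transpose_transpose]
    have huM : u ᵥ* M = w := by
      rw [← hsym, ← mulVec_transpose, transpose_transpose, hMu]
    have hεε : (Fᵀ *ᵥ u) ⬝ᵥ (Fᵀ *ᵥ u) = u ⬝ᵥ w := by
      rw [dotProduct_mulVec, mulVec_transpose, vecMul_vecMul, ← hMdef, huM,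
        dotProduct_comm]
    set s : ℝ := u ⬝ᵥ w with hs
    have hs0 : 0 ≤ s := hεε ▸ dns _
    have hq : 0 ≤ θ * s - s^2 := by
      have := hpsd.dotProduct_mulVec_nonneg u
      simp only [star_trivial] at this
      rw [sub_mulVec, dotProduct_sub, dot_vecMulVec, smul_mulVec,
        dotProduct_smul, hMu, smul_eq_mul, dotProduct_comm w u, ← hs, sq] at this
      nlinarith
    have hsθ : s ≤ θ := by
      rcases eq_or_lt_of_le hs0 with h | h
      · rw [← h]; exact hθ
      · nlinarith
    exact ⟨Fᵀ *ᵥ u, by rw [hεε]; exact hsθ,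
      by rw [mulVec_mulVec, ← hMdef, hMu]⟩

theorem stmt18 (n m : ℕ)
    (xp : Fin n → ℝ) (z : Fin n ⊕ Fin m → ℝ) (θ : ℝ) (hθ : 0 ≤ θ)
    (A : Matrix (Fin n) (Fin n) ℝ) (B : Matrix (Fin n) (Fin m) ℝ)
    (F : Matrix (Fin n) (Fin n ⊕ (Fin n ⊕ Fin m)) ℝ)
    (hF : F = Matrix.fromCols (1 : Matrix (Fin n) (Fin n) ℝ)
      (Matrix.fromCols (-A) (-B)))
    (w : Fin n → ℝ) (hw : w = xp - (Matrix.fromCols A B).mulVec z) :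
    ((∃ ε : Fin n ⊕ (Fin n ⊕ Fin m) → ℝ, ε ⬝ᵥ ε ≤ θ ∧
        xp = (Matrix.fromCols A B).mulVec z + F.mulVec ε) ↔
      (F * (θ • (1 : Matrix (Fin n ⊕ (Fin n ⊕ Fin m)) (Fin n ⊕ (Fin n ⊕ Fin m)) ℝ)) * Fᵀ
        - Matrix.vecMulVec w w).PosSemidef) ∧
    ((F * (θ • (1 : Matrix (Fin n ⊕ (Fin n ⊕ Fin m)) (Fin n ⊕ (Fin n ⊕ Fin m)) ℝ)) * Fᵀ
        - Matrix.vecMulVec w w).PosSemidef ↔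
      (θ • ((1 : Matrix (Fin n) (Fin n) ℝ) + A * Aᵀ + B * Bᵀ)
        - Matrix.vecMulVec w w).PosSemidef) := by
  have hFF : F * Fᵀ = 1 + A * Aᵀ + B * Bᵀ := by
    subst hF
    rw [transpose_fromCols, fromCols_mul_fromRows, transpose_fromCols,
      fromCols_mul_fromRows, transpose_one, mul_one]
    simp [Matrix.neg_mul, Matrix.mul_neg, add_assoc]
  have hsm : F * (θ • (1 : Matrix (Fin n ⊕ (Fin n ⊕ Fin m)) (Fin n ⊕ (Fin n ⊕ Fin m)) ℝ)) * Fᵀ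
      = θ • (F * Fᵀ) := by
    rw [Matrix.mul_smul, Matrix.mul_one, Matrix.smul_mul]
  have hpd : (F * Fᵀ).PosDef := by
    rw [hFF]
    exact (Matrix.PosDef.one.add_posSemidef
      (posSemidef_self_mul_conjTranspose A)).add_posSemidef
      (posSemidef_self_mul_conjTranspose B)
  have hcond : ∀ ε, (xp = (Matrix.fromCols A B).mulVec z + F.mulVec ε) ↔
      (w = F.mulVec ε) := fun ε => by
    rw [hw]; exact (sub_eq_iff_eq_add').symm
  constructor
  · rw [hsm]
    exact Iff.trans (exists_congr fun ε => and_congr_right fun _ => hcond ε)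
      (key F w θ hθ hpd)
  · rw [hsm, hFF]
end
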